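/- lim_{q→∞} β^{q−2}( (1/‖â^q‖)·√(3/(q+1)) ) = 0. That is, the largest empty cap discrepancy of the set of permutations of the maximal configuration ŷ^q := √(q(q²−1)/12)·â^q/‖â^q‖ tends to 0 as q → ∞ (the maximal configurations are asymptotically permutation-full). -/

import Mathlib

open MeasureTheory Filter

/-- `betaCap q t` is the normalized surface area `β^{q-2}(t)` of a spherical cap of angular
half-width `arccos t` on a `(q-2)`-dimensional sphere. -/
noncomputable def betaCap (q : ℕ) (t : ℝ) : ℝ :=
  (Real.Gamma (((q : ℝ) - 1) / 2) / (Real.Gamma (1 / 2) * Real.Gamma (((q : ℝ) - 2) / 2))) *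
    ∫ v in t..1, (1 - v ^ 2) ^ ((q : ℝ) / 2 - 2)

/-- `b_k^q = √(3k(q-k)/(q(q+1)))`. -/
noncomputable def bcoef (q k : ℕ) : ℝ :=
  Real.sqrt (3 * k * ((q : ℝ) - k) / (q * ((q : ℝ) + 1)))

/-- The vector `â^q ∈ ℝ^q` with `â_k^q = b_{k-1}^q - b_k^q`, `k = 1,…,q`. -/
noncomputable def ahat (q : ℕ) : EuclideanSpace ℝ (Fin q) := WithLp.toLp 2 fun i =>
  bcoef q (i : ℕ) - bcoef q ((i : ℕ) + 1)

set_option maxHeartbeats 1000000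
section AuxLemmas
open Real Finset

lemma sq_sqrt_sub_le {a b R : ℝ} (ha : 0 ≤ a) (hb : 0 ≤ b) (hR : 0 ≤ R)
    (h : (a - b)^2 ≤ R * a ∨ (a - b)^2 ≤ R * b) :
    (Real.sqrt a - Real.sqrt b)^2 ≤ R := by
  rcases (add_nonneg ha hb).eq_or_lt with h0 | h0
  · have ha0 : a = 0 := by linarith [ha, hb]
    have hb0 : b = 0 := by linarith
    simp [ha0, hb0, hR]
  · set s := Real.sqrt a + Real.sqrt b with hs
    have hsa := Real.sq_sqrt ha
    have hsb := Real.sq_sqrt hb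
    have hs0 : 0 < s := by
      rcases lt_or_ge 0 a with h1 | h1
      · have := Real.sqrt_pos.2 h1
        have := Real.sqrt_nonneg b
        positivity
      · have hbpos : 0 < b := by linarith
        have := Real.sqrt_pos.2 hbpos
        have := Real.sqrt_nonneg a
        positivity
    have key : (Real.sqrt a - Real.sqrt b)^2 * s^2 = (a - b)^2 := by
      have : (Real.sqrt a - Real.sqrt b) * s = a - b := by
        rw [hs]; ring_nf; nlinarith [hsa, hsb]
      calc (Real.sqrt a - Real.sqrt b)^2 * s^2 = ((Real.sqrt a - Real.sqrt b) * s)^2 := by ring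
      _ = (a-b)^2 := by rw [this]
    have hle : (a - b)^2 ≤ R * s^2 := by
      have has : a ≤ s^2 := by nlinarith [Real.sqrt_nonneg a, Real.sqrt_nonneg b, Real.sqrt_nonneg (a*b)]
      have hbs : b ≤ s^2 := by nlinarith [Real.sqrt_nonneg a, Real.sqrt_nonneg b]
      rcases h with h | h
      · exact h.trans (by nlinarith)
      · exact h.trans (by nlinarith)
    have := key ▸ hle
    have hs2 : 0 < s^2 := by positivity
    nlinarith

lemma termBound (q i : ℕ) (hq : 2 ≤ q) (hi : i < q) :
    (bcoef q i - bcoef q (i+1))^2 ≤ 6/(q:ℝ) * (1/((i:ℝ)+1) + 1/((q:ℝ)-(i:ℝ))) := by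
  have hQ2 : (2:ℝ) ≤ (q:ℝ) := by exact_mod_cast hq
  have hI0 : (0:ℝ) ≤ (i:ℝ) := Nat.cast_nonneg i
  have hIQ : (i:ℝ) + 1 ≤ (q:ℝ) := by exact_mod_cast hi
  set Q := (q:ℝ) with hQdef
  set I := (i:ℝ) with hIdef
  have hQ0 : 0 < Q := by linarith
  have hQ1 : 0 < Q + 1 := by linarith
  have hI1 : 0 < I + 1 := by linarith
  have hQI : 0 < Q - I := by linarith
  have hQI1 : 0 ≤ Q - I - 1 := by linarith
  set A := 3 * I * (Q - I) / (Q * (Q + 1)) with hA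
  set B := 3 * (I + 1) * (Q - I - 1) / (Q * (Q + 1)) with hB
  set R := 6/Q * (1/(I+1) + 1/(Q-I)) with hR
  have hAB : A - B = 3 * (2*I + 1 - Q) / (Q * (Q+1)) := by
    rw [hA, hB]; field_simp; ring
  have hA0 : 0 ≤ A := by positivity
  have hB0 : 0 ≤ B := by positivity
  have hR0 : 0 ≤ R := by positivity
  have hcast : bcoef q i = Real.sqrt A ∧ bcoef q (i+1) = Real.sqrt B := by
    constructor
    · rw [bcoef, hA]
    · rw [bcoef, hB]; push_cast; ring_nf; rfl
  rw [hcast.1, hcast.2]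
  apply sq_sqrt_sub_le hA0 hB0 hR0
  by_cases hc : 2*I + 1 ≤ Q
  · right
    have step1 : (A - B)^2 = (3*(Q - 2*I - 1))^2 / (Q*(Q+1))^2 := by
      rw [hAB, div_pow]; ring_nf
    have step2 : 6/Q * (1/(I+1)) * B ≤ R * B := by
      apply mul_le_mul_of_nonneg_right _ hB0
      rw [hR]
      have : 0 ≤ 1/(Q-I) := by positivity
      have h6 : 0 < 6/Q := by positivity
      nlinarith [h6]
    have step3 : 6/Q * (1/(I+1)) * B = 18 * (Q - I - 1) / (Q^2 * (Q+1)) := by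
      rw [hB]; field_simp; ring
    refine le_trans ?_ step2
    rw [step3, step1, div_le_div_iff₀ (by positivity) (by positivity)]
    have key : (Q - 2*I - 1) * (Q - 2*I - 1) ≤ (Q + 1) * (Q - I - 1) := by
      have h1 : Q - 2*I - 1 ≤ Q - I - 1 := by linarith
      have h2 : Q - 2*I - 1 ≤ Q + 1 := by linarith
      have h3 : 0 ≤ Q - 2*I - 1 := by linarith
      nlinarith
    have hprod : (0:ℝ) ≤ (Q - I - 1) * (Q^2 * (Q+1)^2) := by positivity
    calc (3*(Q - 2*I - 1))^2 * (Q^2*(Q+1))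
        = ((Q - 2*I - 1) * (Q - 2*I - 1)) * (9 * Q^2 * (Q+1)) := by ring
      _ ≤ ((Q + 1) * (Q - I - 1)) * (9 * Q^2 * (Q+1)) := by
          apply mul_le_mul_of_nonneg_right key (by positivity)
      _ ≤ 18 * (Q - I - 1) * (Q*(Q+1))^2 := by nlinarith [hprod]
  · left
    push_neg at hc
    have hI1' : 1 ≤ I := by
      have hne : i ≠ 0 := by
        intro h0
        rw [hIdef, h0] at hc
        norm_num at hc
        linarith
      have h1 : 1 ≤ i := Nat.one_le_iff_ne_zero.2 hne
      rw [hIdef]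
      exact_mod_cast h1
    have step1 : (A - B)^2 = (3*(2*I + 1 - Q))^2 / (Q*(Q+1))^2 := by
      rw [hAB, div_pow]
    have step2 : 6/Q * (1/(Q-I)) * A ≤ R * A := by
      apply mul_le_mul_of_nonneg_right _ hA0
      rw [hR]
      have : 0 ≤ 1/(I+1) := by positivity
      have h6 : 0 < 6/Q := by positivity
      nlinarith [h6]
    have step3 : 6/Q * (1/(Q-I)) * A = 18 * I / (Q^2 * (Q+1)) := by
      rw [hA]; field_simp; ring
    refine le_trans ?_ step2
    rw [step3, step1, div_le_div_iff₀ (by positivity) (by positivity)]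
    have key : (2*I + 1 - Q) * (2*I + 1 - Q) ≤ (Q + 1) * (2 * I) := by
      have h1 : 2*I + 1 - Q ≤ 2*I := by linarith
      have h2 : 2*I + 1 - Q ≤ Q + 1 := by linarith
      have h3 : 0 ≤ 2*I + 1 - Q := by linarith
      nlinarith
    calc (3*(2*I + 1 - Q))^2 * (Q^2*(Q+1))
        = ((2*I + 1 - Q) * (2*I + 1 - Q)) * (9 * Q^2 * (Q+1)) := by ring
      _ ≤ ((Q + 1) * (2 * I)) * (9 * Q^2 * (Q+1)) := by
          apply mul_le_mul_of_nonneg_right key (by positivity)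
      _ = 18 * I * (Q*(Q+1))^2 := by ring

lemma harm_le (q : ℕ) : ∑ i ∈ range q, (1:ℝ)/((i:ℝ)+1) ≤ 2 * Real.sqrt q := by
  have key : ∀ i : ℕ, (1:ℝ)/((i:ℝ)+1) ≤ 2*Real.sqrt ((i:ℝ)+1) - 2*Real.sqrt (i:ℝ) := by
    intro i
    have h1 : (0:ℝ) ≤ (i:ℝ) := Nat.cast_nonneg i
    set s := Real.sqrt ((i:ℝ)+1) with hs
    set t := Real.sqrt (i:ℝ) with ht
    have hs2 : s^2 = (i:ℝ)+1 := Real.sq_sqrt (by linarith)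
    have ht2 : t^2 = (i:ℝ) := Real.sq_sqrt h1
    have hs1 : 1 ≤ s := by
      rw [hs]
      have := Real.sqrt_le_sqrt (show (1:ℝ) ≤ (i:ℝ)+1 by linarith)
      simpa using this
    have hts : t ≤ s := Real.sqrt_le_sqrt (by linarith)
    have ht0 : 0 ≤ t := Real.sqrt_nonneg _
    rw [div_le_iff₀ (by linarith : (0:ℝ) < (i:ℝ)+1)]
    nlinarith [sq_nonneg (s-t), sq_nonneg (s+t)]
  calc ∑ i ∈ range q, (1:ℝ)/((i:ℝ)+1)
      ≤ ∑ i ∈ range q, (2*Real.sqrt ((i:ℝ)+1) - 2*Real.sqrt (i:ℝ)) :=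
        Finset.sum_le_sum (fun i _ => key i)
    _ = 2*Real.sqrt q - 2*Real.sqrt 0 := by
        have := Finset.sum_range_sub (fun n : ℕ => 2*Real.sqrt (n:ℝ)) q
        simp only [Nat.cast_add, Nat.cast_one] at this
        rw [this]
        norm_num
    _ ≤ 2 * Real.sqrt q := by simp [Real.sqrt_nonneg]

lemma norm_ahat_sq (q : ℕ) :
    ‖ahat q‖^2 = ∑ i ∈ range q, (bcoef q i - bcoef q (i+1))^2 := by
  rw [EuclideanSpace.norm_eq]
  rw [Real.sq_sqrt (by positivity)]
  rw [← Fin.sum_univ_eq_sum_range (fun i => (bcoef q i - bcoef q (i+1))^2) q]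
  congr 1
  ext i
  rw [Real.norm_eq_abs, sq_abs]
  simp [ahat]

lemma norm_sq_le (q : ℕ) (hq : 2 ≤ q) : ‖ahat q‖^2 ≤ 24 / Real.sqrt q := by
  rw [norm_ahat_sq]
  have step : ∑ i ∈ range q, (bcoef q i - bcoef q (i+1))^2
      ≤ ∑ i ∈ range q, 6/(q:ℝ) * (1/((i:ℝ)+1) + 1/((q:ℝ)-(i:ℝ))) :=
    Finset.sum_le_sum (fun i hi => termBound q i hq (Finset.mem_range.1 hi))
  refine step.trans ?_
  have hrefl : ∑ i ∈ range q, (1:ℝ)/((q:ℝ)-(i:ℝ)) = ∑ i ∈ range q, (1:ℝ)/((i:ℝ)+1) := by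
    rw [← Finset.sum_range_reflect]
    apply Finset.sum_congr rfl
    intro j hj
    have hj' : j < q := Finset.mem_range.1 hj
    have : ((q - 1 - j : ℕ) : ℝ) = (q:ℝ) - 1 - (j:ℝ) := by
      have h1 : j ≤ q - 1 := Nat.le_sub_one_of_lt hj'
      have h2 : 1 ≤ q := le_trans (by norm_num) hq
      push_cast [Nat.cast_sub h1, Nat.cast_sub h2]
      ring
    rw [this]
    ring_nf
  rw [← Finset.mul_sum, Finset.sum_add_distrib, hrefl]
  have hq0 : (0:ℝ) < q := by positivity
  have hsq : 0 < Real.sqrt q := Real.sqrt_pos.2 hq0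
  have hh := harm_le q
  have h1 : ∑ i ∈ range q, (1:ℝ)/((i:ℝ)+1) + ∑ i ∈ range q, (1:ℝ)/((i:ℝ)+1) ≤ 4 * Real.sqrt q := by
    linarith
  calc 6/(q:ℝ) * (∑ i ∈ range q, (1:ℝ)/((i:ℝ)+1) + ∑ i ∈ range q, (1:ℝ)/((i:ℝ)+1))
      ≤ 6/(q:ℝ) * (4* Real.sqrt q) := by
        apply mul_le_mul_of_nonneg_left h1 (by positivity)
    _ = 24 * Real.sqrt q / q := by ring
    _ = 24 / Real.sqrt q := by
        rw [div_eq_div_iff (ne_of_gt hq0) (ne_of_gt hsq), mul_assoc,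
          Real.mul_self_sqrt (le_of_lt hq0)]

lemma norm_sq_ge (q : ℕ) (hq : 2 ≤ q) : 6*((q:ℝ)-1)/((q:ℝ)*((q:ℝ)+1)) ≤ ‖ahat q‖^2 := by
  rw [norm_ahat_sq]
  have hq1 : (1:ℝ) ≤ (q:ℝ) := by exact_mod_cast le_trans (by norm_num) hq
  have hq0 : (0:ℝ) < (q:ℝ) := by linarith
  have hb0 : bcoef q 0 = 0 := by simp [bcoef]
  have hbq : bcoef q q = 0 := by simp [bcoef]
  have hb1 : (bcoef q 0 - bcoef q 1)^2 = 3*((q:ℝ)-1)/((q:ℝ)*((q:ℝ)+1)) := by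
    have harg : 3 * ((1:ℕ):ℝ) * ((q : ℝ) - ((1:ℕ):ℝ)) / ((q:ℝ) * ((q : ℝ) + 1))
        = 3*((q:ℝ)-1)/((q:ℝ)*((q:ℝ)+1)) := by push_cast; ring
    rw [hb0, bcoef, harg, zero_sub, neg_sq,
      Real.sq_sqrt (div_nonneg (by nlinarith) (by positivity))]
  have hbq1 : (bcoef q (q-1) - bcoef q (q-1+1))^2 = 3*((q:ℝ)-1)/((q:ℝ)*((q:ℝ)+1)) := by
    have hqq : q - 1 + 1 = q := Nat.succ_pred_eq_of_pos (Nat.lt_of_lt_of_le Nat.zero_lt_two hq)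
    rw [hqq, hbq, bcoef]
    have hcast : ((q-1 : ℕ):ℝ) = (q:ℝ) - 1 := by
      rw [Nat.cast_sub (show (1:ℕ) ≤ q by omega)]; norm_num
    rw [hcast, sub_zero, Real.sq_sqrt (div_nonneg (by nlinarith) (by positivity))]
    ring
  have hsub : {0, q-1} ⊆ range q := by
    intro x hx
    simp only [Finset.mem_insert, Finset.mem_singleton] at hx
    rcases hx with h | h <;> simp [h] <;> omega
  have hne : (0:ℕ) ≠ q - 1 := by omega
  have := Finset.sum_le_sum_of_subset_of_nonneg hsub
    (fun i _ _ => sq_nonneg (bcoef q i - bcoef q (i+1)))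
  refine le_trans ?_ this
  rw [Finset.sum_pair hne, hb1, hbq1]
  have : 3*((q:ℝ)-1)/((q:ℝ)*((q:ℝ)+1)) + 3*((q:ℝ)-1)/((q:ℝ)*((q:ℝ)+1))
      = 6*((q:ℝ)-1)/((q:ℝ)*((q:ℝ)+1)) := by ring
  linarith

lemma main_bound (q : ℕ) (hq9 : 9 ≤ q) :
    0 ≤ betaCap q ((1 / ‖ahat q‖) * Real.sqrt (3 / ((q : ℝ) + 1))) ∧
    betaCap q ((1 / ‖ahat q‖) * Real.sqrt (3 / ((q : ℝ) + 1)))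
      ≤ (q:ℝ) * Real.exp (-(Real.sqrt q / 64)) := by
  set T := (1 / ‖ahat q‖) * Real.sqrt (3 / ((q : ℝ) + 1)) with hT
  have hq2 : (2:ℕ) ≤ q := by omega
  have hQ9 : (9:ℝ) ≤ (q:ℝ) := by exact_mod_cast hq9
  have hq0 : (0:ℝ) < (q:ℝ) := by linarith
  have hsqq : 0 < Real.sqrt q := Real.sqrt_pos.2 hq0
  have hT0 : 0 ≤ T := by rw [hT]; positivity
  have hlo := norm_sq_ge q hq2
  have hup := norm_sq_le q hq2
  have hsq : 0 < ‖ahat q‖^2 := lt_of_lt_of_le (div_pos (by nlinarith) (by positivity)) hlo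
  have hnpos : 0 < ‖ahat q‖ := by
    rcases (norm_nonneg (ahat q)).eq_or_lt with h|h
    · rw [← h] at hsq; simp at hsq
    · exact h
  have hT2 : T^2 = 3 / (((q:ℝ)+1) * ‖ahat q‖^2) := by
    rw [hT, mul_pow, Real.sq_sqrt (by positivity), div_pow, one_pow]
    field_simp
  have hT2le : T^2 ≤ 1 := by
    rw [hT2, div_le_one (by positivity)]
    calc (3:ℝ) ≤ ((q:ℝ)+1) * (6*((q:ℝ)-1)/((q:ℝ)*((q:ℝ)+1))) := by
          have heq : ((q:ℝ)+1) * (6*((q:ℝ)-1)/((q:ℝ)*((q:ℝ)+1))) = 6*((q:ℝ)-1)/(q:ℝ) := by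
            field_simp
          rw [heq, le_div_iff₀ hq0]
          nlinarith
      _ ≤ ((q:ℝ)+1) * ‖ahat q‖^2 := by
          apply mul_le_mul_of_nonneg_left hlo (by positivity)
  have hT1 : T ≤ 1 := by nlinarith [hT0, hT2le]
  set p := (q:ℝ)/2 - 2 with hp
  have hp0 : 0 < p := by rw [hp]; linarith
  -- lower bound for T^2
  have hT2lo : 1/(16*Real.sqrt q) ≤ T^2 := by
    have h1 : 3/(((q:ℝ)+1) * (24/Real.sqrt q)) ≤ T^2 := by
      rw [hT2]
      gcongr
    refine le_trans ?_ h1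
    have hss : Real.sqrt q * Real.sqrt q = (q:ℝ) := Real.mul_self_sqrt hq0.le
    have heq : 3/(((q:ℝ)+1) * (24/Real.sqrt q)) = Real.sqrt q/(8*((q:ℝ)+1)) := by
      rw [div_eq_div_iff (by positivity) (by positivity)]
      field_simp
      nlinarith [hss]
    rw [heq, div_le_div_iff₀ (by positivity) (by positivity)]
    nlinarith [hss]
  -- lower bound for p * T^2
  have hpT : Real.sqrt q / 64 ≤ p * T^2 := by
    have hq4 : (q:ℝ)/4 ≤ p := by rw [hp]; linarith
    have step : ((q:ℝ)/4) * (1/(16*Real.sqrt q)) ≤ p * T^2 :=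
      mul_le_mul hq4 hT2lo (by positivity) (by linarith)
    refine le_trans ?_ step
    have hss : Real.sqrt q * Real.sqrt q = (q:ℝ) := Real.mul_self_sqrt hq0.le
    have heq : ((q:ℝ)/4) * (1/(16*Real.sqrt q)) = (q:ℝ)/(64*Real.sqrt q) := by ring
    rw [heq, div_le_div_iff₀ (by positivity) (by positivity)]
    nlinarith [hss]
  -- Gamma factor bounds
  set C := Real.Gamma (((q : ℝ) - 1) / 2) / (Real.Gamma (1 / 2) * Real.Gamma (((q : ℝ) - 2) / 2))
    with hC
  have hGa : 0 < Real.Gamma (((q:ℝ)-1)/2) := Real.Gamma_pos_of_pos (by linarith)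
  have hGb : 0 < Real.Gamma (((q:ℝ)-2)/2) := Real.Gamma_pos_of_pos (by linarith)
  have hGh : 1 ≤ Real.Gamma (1/2) := by
    rw [Real.Gamma_one_half_eq]
    rw [show (1:ℝ) = Real.sqrt 1 by simp]
    exact Real.sqrt_le_sqrt (by linarith [Real.pi_gt_three])
  have hC0 : 0 ≤ C := by
    rw [hC]
    apply div_nonneg hGa.le
    apply mul_nonneg (by linarith) hGb.le
  have hCq : C ≤ (q:ℝ) := by
    have hmono : Real.Gamma (((q:ℝ)-1)/2) ≤ Real.Gamma (((q:ℝ)-2)/2 + 1) := by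
      apply Real.Gamma_strictMonoOn_Ici.monotoneOn
      · simp only [Set.mem_Ici]; linarith
      · simp only [Set.mem_Ici]; linarith
      · linarith
    have hadd : Real.Gamma (((q:ℝ)-2)/2 + 1) = ((q:ℝ)-2)/2 * Real.Gamma (((q:ℝ)-2)/2) :=
      Real.Gamma_add_one (by intro h; nlinarith [h])
    have h1 : C ≤ Real.Gamma (((q:ℝ)-1)/2) / Real.Gamma (((q:ℝ)-2)/2) := by
      rw [hC]
      gcongr
      nlinarith [hGb, hGh]
    refine h1.trans ?_
    rw [div_le_iff₀ hGb]
    calc Real.Gamma (((q:ℝ)-1)/2) ≤ ((q:ℝ)-2)/2 * Real.Gamma (((q:ℝ)-2)/2) := by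
          rw [← hadd]; exact hmono
      _ ≤ (q:ℝ) * Real.Gamma (((q:ℝ)-2)/2) := by
          apply mul_le_mul_of_nonneg_right (by linarith) hGb.le
  -- integral bounds
  have hcont : Continuous (fun v : ℝ => (1 - v^2) ^ p) := by
    rw [continuous_iff_continuousAt]
    intro x
    exact ((continuous_const.sub (continuous_pow 2)).continuousAt).rpow_const (Or.inr hp0.le)
  have hJ0 : 0 ≤ ∫ v in T..1, (1 - v^2) ^ p := by
    apply intervalIntegral.integral_nonneg hT1
    intro x hx
    apply Real.rpow_nonneg
    nlinarith [hx.1, hx.2, hT0]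
  have hJle : (∫ v in T..1, (1 - v^2) ^ p) ≤ Real.exp (-(Real.sqrt q / 64)) := by
    have hM0 : 0 ≤ (1 - T^2) ^ p := Real.rpow_nonneg (by linarith) p
    have step1 : (∫ v in T..1, (1 - v^2) ^ p) ≤ ∫ _v in T..1, (1 - T^2) ^ p := by
      apply intervalIntegral.integral_mono_on hT1 (hcont.intervalIntegrable T 1)
        intervalIntegrable_const
      intro x hx
      apply Real.rpow_le_rpow (by nlinarith [hx.1, hx.2, hT0]) (by nlinarith [hx.1, hT0]) hp0.le
    have step2 : (∫ _v in T..1, (1 - T^2) ^ p) = (1 - T) * (1 - T^2) ^ p := by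
      rw [intervalIntegral.integral_const, smul_eq_mul]
    have step3 : (1 - T) * (1 - T^2) ^ p ≤ (1 - T^2) ^ p := by
      nlinarith [hM0, hT0]
    have step4 : (1 - T^2) ^ p ≤ Real.exp (-T^2) ^ p := by
      apply Real.rpow_le_rpow (by linarith) _ hp0.le
      linarith [Real.add_one_le_exp (-T^2)]
    have step5 : Real.exp (-T^2) ^ p = Real.exp (-T^2 * p) := (Real.exp_mul _ _).symm
    have step6 : Real.exp (-T^2 * p) ≤ Real.exp (-(Real.sqrt q / 64)) := by
      apply Real.exp_le_exp.2
      nlinarith [hpT]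
    calc (∫ v in T..1, (1 - v^2) ^ p) ≤ ∫ _v in T..1, (1 - T^2) ^ p := step1
      _ = (1 - T) * (1 - T^2) ^ p := step2
      _ ≤ (1 - T^2) ^ p := step3
      _ ≤ Real.exp (-T^2) ^ p := step4
      _ = Real.exp (-T^2 * p) := step5
      _ ≤ Real.exp (-(Real.sqrt q / 64)) := step6
  constructor
  · rw [betaCap]
    exact mul_nonneg hC0 hJ0
  · rw [betaCap]
    calc C * ∫ v in T..1, (1 - v^2) ^ ((q:ℝ)/2 - 2)
        ≤ (q:ℝ) * Real.exp (-(Real.sqrt q / 64)) := by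
          apply mul_le_mul hCq _ _ hq0.le
          · exact hJle
          · exact hJ0

end AuxLemmas

/-- Proposition 4.5: `β^{q-2}((1/‖â^q‖)√(3/(q+1))) → 0`, i.e. the largest empty cap discrepancy
of the permutations of the maximal configuration tends to `0` (the maximal configurations are
asymptotically permutation-full). -/
theorem stmt12 :
    Tendsto (fun q : ℕ => betaCap q ((1 / ‖ahat q‖) * Real.sqrt (3 / ((q : ℝ) + 1)))) atTop
      (nhds 0) := by
  have hg : Tendsto (fun q : ℕ => (q:ℝ) * Real.exp (-(Real.sqrt q / 64))) atTop (nhds 0) := by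
    have h1 : Tendsto (fun q : ℕ => Real.sqrt q / 64) atTop atTop := by
      apply Tendsto.atTop_div_const (by norm_num : (0:ℝ) < 64)
      have := (tendsto_rpow_atTop (by norm_num : (0:ℝ) < 1/2)).comp tendsto_natCast_atTop_atTop
      exact this.congr (fun n => (Real.sqrt_eq_rpow (n:ℝ)).symm)
    have h2 := (Real.tendsto_pow_mul_exp_neg_atTop_nhds_zero 2).comp h1
    have h3 : Tendsto (fun q : ℕ =>
        4096 * ((Real.sqrt q / 64)^2 * Real.exp (-(Real.sqrt q / 64)))) atTop (nhds 0) := by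
      have := h2.const_mul (4096:ℝ)
      simpa using this
    refine h3.congr (fun q => ?_)
    have : (Real.sqrt q / 64)^2 = (q:ℝ)/4096 := by
      rw [div_pow, Real.sq_sqrt (Nat.cast_nonneg q)]; norm_num
    rw [this]; ring
  apply tendsto_of_tendsto_of_tendsto_of_le_of_le' tendsto_const_nhds hg
  · filter_upwards [eventually_ge_atTop 9] with q hq9
    exact (main_bound q hq9).1
  · filter_upwards [eventually_ge_atTop 9] with q hq9
    exact (main_bound q hq9).2
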